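/- arXiv:2201.03819 — 3 statements merged into one kernel-verified Lean document; each statement's English description precedes it below -/
import Mathlib

section
/- Consider the planar ODE system X₁' = (1 - X₂)|X₁|, X₂' = 1 with initial condition X₁(0) = a, X₂(0) = 0. Then the solution satisfies X₁(2) = a and X₂(2) = 2. -/
open Set

/-!
Since `X₂' = 1`, `X₂ t = t`, so `X₁` solves the scalar equation `x' = (1 - t)|x|`, whose
right-hand side is `1`-Lipschitz in `x` for `t ∈ [0, 2]`. By uniqueness, `X₁` is the explicit
solution `a · exp (sgn a · (t - t² / 2))`, and the exponent vanishes at `t = 2` because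
`∫₀² (1 - s) ds = 0`.
-/

open Real

theorem lipschitzWith_const_mul_abs (c : ℝ) :
    LipschitzWith (nnabs c) (fun x : ℝ => c * |x|) :=
  LipschitzWith.of_dist_le_mul fun x y => by
    rw [Real.dist_eq, Real.dist_eq, ← mul_sub, abs_mul, coe_nnabs]
    exact mul_le_mul_of_nonneg_left (abs_abs_sub_abs_le_abs_sub x y) (abs_nonneg c)

theorem eqOn_of_hasDerivAt_mul_abs {c f g : ℝ → ℝ} {K : NNReal} {a b : ℝ}
    (hc : ∀ t ∈ Ico a b, |c t| ≤ K)
    (hf : ∀ t ∈ Icc a b, HasDerivAt f (c t * |f t|) t)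
    (hg : ∀ t ∈ Icc a b, HasDerivAt g (c t * |g t|) t) (ha : f a = g a) :
    EqOn f g (Icc a b) :=
  ODE_solution_unique_of_mem_Icc_right (v := fun t x => c t * |x|) (s := fun _ => univ)
    (fun t ht => ((lipschitzWith_const_mul_abs (c t)).weaken (hc t ht)).lipschitzOnWith)
    (fun t ht => (hf t ht).continuousAt.continuousWithinAt)
    (fun t ht => (hf t (Ico_subset_Icc_self ht)).hasDerivWithinAt) (fun _ _ => mem_univ _)
    (fun t ht => (hg t ht).continuousAt.continuousWithinAt)
    (fun t ht => (hg t (Ico_subset_Icc_self ht)).hasDerivWithinAt) (fun _ _ => mem_univ _) ha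

theorem hasDerivAt_mul_exp_sign_mul {φ : ℝ → ℝ} {c t : ℝ} (a : ℝ)
    (hφ : HasDerivAt φ c t) :
    HasDerivAt (fun s => a * exp (SignType.sign a * φ s))
      (c * |a * exp (SignType.sign a * φ t)|) t := by
  refine (((hφ.const_mul (SignType.sign a : ℝ)).exp).const_mul a).congr_deriv ?_
  rw [abs_mul, abs_of_pos (exp_pos _), ← self_mul_sign]
  ring

/-- Example 3.8 of Barton et al.: for the planar system `X₁' = (1 - X₂)|X₁|`,
`X₂' = 1` with `X₁(0) = a`, `X₂(0) = 0`, the time-2 flow is `(a,0) ↦ (a,2)`. -/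
theorem barton_example_flow
    (a : ℝ) (X₁ X₂ : ℝ → ℝ)
    (h0₁ : X₁ 0 = a) (h0₂ : X₂ 0 = 0)
    (hd₁ : ∀ t ∈ Icc (0 : ℝ) 2, HasDerivAt X₁ ((1 - X₂ t) * |X₁ t|) t)
    (hd₂ : ∀ t ∈ Icc (0 : ℝ) 2, HasDerivAt X₂ 1 t) :
    X₁ 2 = a ∧ X₂ 2 = 2 := by
  have hX₂ : ∀ t ∈ Icc (0 : ℝ) 2, X₂ t = t :=
    eq_of_has_deriv_right_eq (fun t ht => (hd₂ t (Ico_subset_Icc_self ht)).hasDerivWithinAt)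
      (fun t _ => (hasDerivAt_id t).hasDerivWithinAt)
      (fun t ht => (hd₂ t ht).continuousAt.continuousWithinAt) continuousOn_id h0₂
  have hφ (t : ℝ) : HasDerivAt (fun s : ℝ => s - s ^ 2 / 2) (1 - t) t := by
    refine ((hasDerivAt_id t).sub ((hasDerivAt_pow 2 t).div_const 2)).congr_deriv ?_
    ring
  have hX₁ : EqOn X₁ (fun s => a * exp (SignType.sign a * (s - s ^ 2 / 2))) (Icc 0 2) := by
    refine eqOn_of_hasDerivAt_mul_abs (c := fun t => 1 - t) (K := 1) ?_ ?_
      (fun t _ => hasDerivAt_mul_exp_sign_mul a (hφ t)) (by simp [h0₁])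
    · intro t ht
      rw [NNReal.coe_one, abs_le]
      constructor <;> linarith [ht.1, ht.2]
    · intro t ht
      simpa only [hX₂ t ht] using hd₁ t ht
  have h2 : (2 : ℝ) ∈ Icc 0 2 := ⟨zero_le_two, le_rfl⟩
  refine ⟨?_, hX₂ 2 h2⟩
  rw [hX₁ h2]
  norm_num
end

section
/- Let D : ℝ^p ⇉ ℝ^{n×p} be a conservative Jacobian for a locally Lipschitz f : ℝ^p → ℝ^n. Then the pointwise convex hull x ⇉ conv(D(x)) is also a conservative Jacobian for f. -/
open MeasureTheory Set

/-- `D` is a conservative Jacobian for `f : ℝ^p → ℝ^n`: it is nonempty-valued,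
locally bounded, has closed graph, and satisfies the chain rule along every
absolutely continuous curve `γ : [0,1] → ℝ^p` (with integrable a.e. derivative `γ'`). -/
def IsConservativeJacobian {n p : ℕ}
    (D : (Fin p → ℝ) → Set (Matrix (Fin n) (Fin p) ℝ))
    (f : (Fin p → ℝ) → (Fin n → ℝ)) : Prop :=
  (∀ x, (D x).Nonempty) ∧
  (∀ x : Fin p → ℝ, ∃ ε > (0 : ℝ), ∃ C : ℝ,
    ∀ y, dist y x < ε → ∀ V ∈ D y, ∀ i j, |V i j| ≤ C) ∧
  IsClosed {q : (Fin p → ℝ) × Matrix (Fin n) (Fin p) ℝ | q.2 ∈ D q.1} ∧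
  (∀ γ γ' : ℝ → (Fin p → ℝ),
    IntegrableOn γ' (Icc (0 : ℝ) 1) →
    (∀ t ∈ Icc (0 : ℝ) 1, γ t - γ 0 = ∫ s in (0 : ℝ)..t, γ' s) →
    ∀ᵐ t ∂(volume.restrict (Icc (0 : ℝ) 1)),
      ∀ V ∈ D (γ t), HasDerivAt (fun s => f (γ s)) (V.mulVec (γ' t)) t)

/-!
Nonemptiness and local boundedness pass to convex hulls at once. Along a curve, at almost every
`t` all `V ∈ D (γ t)` give the same derivative `V γ'(t)`; since derivatives are unique, the
matrices with that product form a convex set, which therefore contains `conv D (γ t)`.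
For the closed graph, Carathéodory writes every point of `conv D y` as a convex combination of
`dim + 1` points of `D y`. Near a given point these all lie in one compact box, so there the graph
of `conv D` is the projection of a closed set along a compact factor, hence closed.
-/

open Module Function Topology

theorem exists_mem_stdSimplex_sum_smul_eq_of_mem_convexHull {𝕜 E : Type*} [Field 𝕜]
    [LinearOrder 𝕜] [IsStrictOrderedRing 𝕜] [AddCommGroup E] [Module 𝕜 E] [FiniteDimensional 𝕜 E]
    {s : Set E} {x : E} (hx : x ∈ convexHull 𝕜 s) :
    ∃ w ∈ stdSimplex 𝕜 (Fin (finrank 𝕜 E + 1)), ∃ z : Fin (finrank 𝕜 E + 1) → E,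
      (∀ i, z i ∈ s) ∧ ∑ i, w i • z i = x := by
  obtain ⟨ι, _, z, w, hzs, hz, hw0, hw1, hwz⟩ := eq_pos_convex_span_of_mem_convexHull hx
  have : Nonempty ι := by
    by_contra h
    simp [not_nonempty_iff.1 h] at hw1
  have hcard : Fintype.card ι ≤ Fintype.card (Fin (finrank 𝕜 E + 1)) := by
    simpa using hz.card_le_finrank_succ.trans (Nat.succ_le_succ (Submodule.finrank_le _))
  obtain ⟨e⟩ := Function.Embedding.nonempty_of_card_le hcard
  have hext : ∀ j ∉ range e, extend e w 0 j = 0 := fun j hj => extend_apply' _ _ _ hj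
  refine ⟨extend e w 0, ⟨fun j => ?_, ?_⟩, z ∘ invFun e, fun j => hzs (mem_range_self _), ?_⟩
  · by_cases hj : j ∈ range e
    · obtain ⟨i, rfl⟩ := hj
      rw [e.injective.extend_apply]
      exact (hw0 i).le
    · rw [hext j hj]
  · rw [← hw1]
    exact (Fintype.sum_of_injective e e.injective _ _ hext
      fun i => (e.injective.extend_apply _ _ i).symm).symm
  · rw [← hwz]
    refine (Fintype.sum_of_injective e e.injective _ _
      (fun j hj => by rw [hext j hj, zero_smul]) fun i => ?_).symm
    simp [e.injective.extend_apply, leftInverse_invFun e.injective i]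

theorem IsClosed.image_fst_of_isCompact {X Y : Type*} [TopologicalSpace X] [TopologicalSpace Y]
    {S : Set (X × Y)} (hS : IsClosed S) {C : Set Y} (hC : IsCompact C)
    (hSC : ∀ q ∈ S, q.2 ∈ C) : IsClosed (Prod.fst '' S) := by
  have : CompactSpace C := isCompact_iff_compactSpace.1 hC
  have hT : IsClosed {q : X × C | (q.1, (q.2 : Y)) ∈ S} :=
    hS.preimage (continuous_fst.prodMk (continuous_subtype_val.comp continuous_snd))
  convert isClosedMap_fst_of_compactSpace _ hT using 1
  ext x
  constructor
  · rintro ⟨⟨x, y⟩, hq, rfl⟩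
    exact ⟨(x, ⟨y, hSC _ hq⟩), hq, rfl⟩
  · rintro ⟨⟨x, y⟩, hq, rfl⟩
    exact ⟨_, hq, rfl⟩

section ClosedGraph

variable {X E : Type*} [TopologicalSpace X] [AddCommGroup E] [Module ℝ E] [TopologicalSpace E]
  [ContinuousAdd E] [ContinuousSMul ℝ E] [T2Space E] [FiniteDimensional ℝ E]

theorem isClosed_setOf_mem_convexHull_inter {D : X → Set E}
    (hD : IsClosed {q : X × E | q.2 ∈ D q.1}) {K : Set E} (hK : IsCompact K) :
    IsClosed {q : X × E | q.2 ∈ convexHull ℝ (D q.1 ∩ K)} := by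
  set m := finrank ℝ E + 1
  let S : Set ((X × E) × (Fin m → ℝ) × (Fin m → E)) :=
    {q | q.2.1 ∈ stdSimplex ℝ (Fin m)} ∩
      (⋂ i, {q | q.2.2 i ∈ D q.1.1 ∧ q.2.2 i ∈ K}) ∩ {q | q.1.2 = ∑ i, q.2.1 i • q.2.2 i}
  have hS : IsClosed S := by
    refine (((isClosed_stdSimplex ℝ _).preimage (continuous_fst.comp continuous_snd)).inter
      (isClosed_iInter fun i => ?_)).inter (isClosed_eq (by fun_prop) (by fun_prop))
    have hv : Continuous fun q : (X × E) × (Fin m → ℝ) × (Fin m → E) => q.2.2 i := by fun_prop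
    exact (hD.preimage (continuous_fst.fst.prodMk hv)).inter (hK.isClosed.preimage hv)
  have hSC : ∀ q ∈ S, q.2 ∈ stdSimplex ℝ (Fin m) ×ˢ univ.pi fun _ => K :=
    fun q hq => ⟨hq.1.1, fun i _ => (mem_iInter.1 hq.1.2 i).2⟩
  convert hS.image_fst_of_isCompact
    ((isCompact_stdSimplex ℝ _).prod (isCompact_univ_pi fun _ => hK)) hSC using 1
  ext q
  constructor
  · intro hq
    obtain ⟨c, hc, v, hv, hsum⟩ := exists_mem_stdSimplex_sum_smul_eq_of_mem_convexHull hq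
    exact ⟨(q, c, v), ⟨⟨hc, mem_iInter.2 hv⟩, hsum.symm⟩, rfl⟩
  · rintro ⟨⟨⟨x, W⟩, c, v⟩, ⟨⟨hc, hv⟩, hW⟩, rfl⟩
    change W = ∑ i, c i • v i at hW
    rw [mem_ofPred_eq, hW]
    exact (convex_convexHull ℝ _).sum_mem (fun i _ => hc.1 i) hc.2
      fun i _ => subset_convexHull ℝ _ (mem_iInter.1 hv i)

theorem isClosed_setOf_mem_convexHull {D : X → Set E}
    (hD : IsClosed {q : X × E | q.2 ∈ D q.1})
    (hbdd : ∀ x, ∃ U ∈ 𝓝 x, ∃ K, IsCompact K ∧ ∀ y ∈ U, D y ⊆ K) :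
    IsClosed {q : X × E | q.2 ∈ convexHull ℝ (D q.1)} := by
  refine isClosed_of_closure_subset fun ⟨x, W⟩ hxW => ?_
  obtain ⟨U, hU, K, hK, hDK⟩ := hbdd x
  have hlocal : interior U ×ˢ univ ∩ {q : X × E | q.2 ∈ convexHull ℝ (D q.1)} ⊆
      {q | q.2 ∈ convexHull ℝ (D q.1 ∩ K)} := by
    rintro ⟨y, V⟩ ⟨⟨hy, -⟩, hV⟩
    rwa [mem_ofPred_eq, inter_eq_left.2 (hDK y (interior_subset hy))]
  have hxW' := closure_minimal hlocal (isClosed_setOf_mem_convexHull_inter hD hK)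
    ((isOpen_interior.prod isOpen_univ).inter_closure
      ⟨⟨mem_interior_iff_mem_nhds.2 hU, mem_univ _⟩, hxW⟩)
  exact convexHull_mono inter_subset_left hxW'

end ClosedGraph

theorem hasDerivAt_of_mem_convexHull {M F : Type*} [AddCommGroup M] [Module ℝ M]
    [NormedAddCommGroup F] [NormedSpace ℝ F] (L : M →ₗ[ℝ] F) {g : ℝ → F} {t : ℝ} {S : Set M}
    (h : ∀ V ∈ S, HasDerivAt g (L V) t) {V : M} (hV : V ∈ convexHull ℝ S) :
    HasDerivAt g (L V) t := by
  have hderiv : Convex ℝ {a : F | HasDerivAt g a t} :=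
    Set.Subsingleton.convex fun _ ha _ hb => HasDerivAt.unique ha hb
  exact convexHull_min h (hderiv.linear_preimage L) hV

theorem Matrix.setOf_forall_abs_le_eq_pi {m n : Type*} (C : ℝ) :
    {V : Matrix m n ℝ | ∀ i j, |V i j| ≤ C} = univ.pi fun _ => univ.pi fun _ => Icc (-C) C := by
  ext V
  show (∀ i j, |V i j| ≤ C) ↔ ∀ i ∈ univ, ∀ j ∈ univ, V i j ∈ Icc (-C) C
  simp only [mem_univ, forall_const, mem_Icc, abs_le]

theorem Matrix.isCompact_setOf_forall_abs_le {m n : Type*} (C : ℝ) :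
    IsCompact {V : Matrix m n ℝ | ∀ i j, |V i j| ≤ C} := by
  rw [Matrix.setOf_forall_abs_le_eq_pi]
  exact isCompact_univ_pi fun _ => isCompact_univ_pi fun _ => isCompact_Icc

theorem Matrix.convex_setOf_forall_abs_le {m n : Type*} (C : ℝ) :
    Convex ℝ {V : Matrix m n ℝ | ∀ i j, |V i j| ≤ C} := by
  rw [Matrix.setOf_forall_abs_le_eq_pi]
  exact convex_pi fun _ _ => convex_pi fun _ _ => convex_Icc _ _

theorem convexHull_isConservativeJacobian_general {n p : ℕ}
    (D : (Fin p → ℝ) → Set (Matrix (Fin n) (Fin p) ℝ))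
    (f : (Fin p → ℝ) → (Fin n → ℝ))
    (hD : IsConservativeJacobian D f) :
    IsConservativeJacobian (fun x => convexHull ℝ (D x)) f := by
  obtain ⟨hne, hbdd, hclosed, hchain⟩ := hD
  have hbox : ∀ x, ∃ ε > (0 : ℝ), ∃ C : ℝ,
      ∀ y, dist y x < ε → D y ⊆ {V | ∀ i j, |V i j| ≤ C} := hbdd
  refine ⟨fun x => (hne x).mono (subset_convexHull ℝ _), fun x => ?_, ?_, fun γ γ' hγ' hγ => ?_⟩
  · obtain ⟨ε, hε, C, hC⟩ := hbox x
    exact ⟨ε, hε, C, fun y hy => convexHull_min (hC y hy) (Matrix.convex_setOf_forall_abs_le C)⟩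
  · refine isClosed_setOf_mem_convexHull hclosed fun x => ?_
    obtain ⟨ε, hε, C, hC⟩ := hbox x
    exact ⟨Metric.ball x ε, Metric.ball_mem_nhds x hε, _, Matrix.isCompact_setOf_forall_abs_le C, hC⟩
  · filter_upwards [hchain γ γ' hγ' hγ] with t ht V hV
    exact hasDerivAt_of_mem_convexHull ((Matrix.mulVecBilin ℝ ℝ).flip (γ' t)) ht hV

/-- The pointwise convex hull of a conservative Jacobian of a locally Lipschitz
function is again a conservative Jacobian. -/
theorem convexHull_isConservativeJacobian {n p : ℕ}
    (D : (Fin p → ℝ) → Set (Matrix (Fin n) (Fin p) ℝ))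
    (f : (Fin p → ℝ) → (Fin n → ℝ))
    (hf : LocallyLipschitz f)
    (hD : IsConservativeJacobian D f) :
    IsConservativeJacobian (fun x => convexHull ℝ (D x)) f :=
  convexHull_isConservativeJacobian_general D f hD
end

section
/- Let G : ℝ^n × ℝ → ℝ^m be such that y ↦ G(x,y) is absolutely continuous for each x and x ↦ G(x,y) is Borel measurable for each y. Then the set of (x,y) where ∂G/∂y(x,y) exists has full Lebesgue measure in ℝ^{n+1}, and (x,y) ↦ ∂G/∂y(x,y) (arbitrarily extended outside its domain) is Lebesgue measurable. -/
open MeasureTheory Set Filter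
open scoped Topology

/-! The difference quotients `r⁻¹ (G(x, y + r) - G(x, y))` over rational increments `r` form a
countable family of jointly measurable functions, since a function continuous in `y` and
measurable in `x` is jointly measurable. As `G(x, ·)` is continuous, their limit as `r → 0` exists
exactly where `∂G/∂y` does, and equals it. So the set where the limit exists is measurable; by the
Lebesgue differentiation theorem it meets each line `{x} × ℝ` in a set of full measure, hence has
full measure by Fubini, and the limit is a measurable function on it. -/

theorem Filter.Tendsto.of_comap_denseRange {ι X Y : Type*} [TopologicalSpace X]
    [TopologicalSpace Y] [RegularSpace Y] {e : ι → X} (he : DenseRange e) {s : Set X}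
    (hs : IsOpen s) {φ : X → Y} (hφ : ContinuousOn φ s) {a : X} {d : Y}
    (h : Tendsto (fun i => φ (e i)) (comap e (𝓝[s] a)) (𝓝 d)) :
    Tendsto φ (𝓝[s] a) (𝓝 d) := by
  rw [(closed_nhds_basis d).tendsto_right_iff]
  rintro V ⟨hV, hVc⟩
  obtain ⟨U, hU, hUV⟩ := h hV
  obtain ⟨O, hO, haO, hOU⟩ := mem_nhdsWithin.1 hU
  filter_upwards [inter_mem_nhdsWithin s (hO.mem_nhds haO)] with x hx
  have hx_closure : x ∈ closure (O ∩ s ∩ range e) :=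
    he.open_subset_closure_inter (hO.inter hs) ⟨hx.2, hx.1⟩
  have hmaps : MapsTo φ (O ∩ s ∩ range e) V := by
    rintro _ ⟨hOs, i, rfl⟩
    exact hUV (show e i ∈ U from hOU hOs)
  have hφx := ((hφ x hx.1).mono fun _ hy => hy.1.2).mem_closure hx_closure hmaps
  rwa [hVc.closure_eq] at hφx

theorem hasDerivAt_iff_tendsto_rat_slope_zero {E : Type*} [NormedAddCommGroup E]
    [NormedSpace ℝ E] {f : ℝ → E} (hf : Continuous f) {x : ℝ} {d : E} :
    HasDerivAt f d x ↔ Tendsto (fun r : ℚ => (r : ℝ)⁻¹ • (f (x + r) - f x))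
      (comap ((↑) : ℚ → ℝ) (𝓝[≠] 0)) (𝓝 d) := by
  rw [hasDerivAt_iff_tendsto_slope_zero]
  refine ⟨fun h => h.comp tendsto_comap, fun h =>
    h.of_comap_denseRange Rat.denseRange_cast isOpen_compl_singleton ?_⟩
  exact (continuousOn_inv₀.mono fun t ht => ht).smul (by fun_prop)

theorem exists_measurable_hasDerivAt_ae_prod {X E : Type*} [MeasurableSpace X] {μ : Measure X}
    [SFinite μ] [NormedAddCommGroup E] [NormedSpace ℝ E] [CompleteSpace E]
    [SecondCountableTopology E] [MeasurableSpace E] [BorelSpace E] {F : X → ℝ → E}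
    (hcont : ∀ x, Continuous (F x)) (hmeas : ∀ y, Measurable fun x => F x y)
    (hdiff : ∀ x, ∀ᵐ y, DifferentiableAt ℝ (F x) y) :
    ∃ h : X × ℝ → E, Measurable h ∧ ∀ᵐ q ∂μ.prod volume, HasDerivAt (F q.1) (h q) q.2 := by
  have hF : Measurable fun q : X × ℝ => F q.1 q.2 :=
    (measurable_uncurry_of_continuous_of_measurable (u := fun y x => F x y) hcont hmeas).comp
      measurable_swap
  set S : ℚ → X × ℝ → E := fun r q => (r : ℝ)⁻¹ • (F q.1 (q.2 + r) - F q.1 q.2)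
  have hS : ∀ r, Measurable (S r) := fun r =>
    ((hF.comp (measurable_fst.prodMk (measurable_snd.add_const _))).sub hF).const_smul _
  have hconv : ∀ᵐ q ∂μ.prod volume,
      ∃ c, Tendsto (S · q) (comap ((↑) : ℚ → ℝ) (𝓝[≠] 0)) (𝓝 c) := by
    rw [Measure.ae_prod_iff_ae_ae (StronglyMeasurable.measurableSet_exists_tendsto
      fun r => (hS r).stronglyMeasurable)]
    exact ae_of_all _ fun x => (hdiff x).mono fun y hy =>
      ⟨_, (hasDerivAt_iff_tendsto_rat_slope_zero (hcont x)).1 hy.hasDerivAt⟩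
  obtain ⟨h, hh, htend⟩ :=
    measurable_limit_of_tendsto_metrizable_ae (fun r => (hS r).aemeasurable) hconv
  exact ⟨h, hh, htend.mono fun q hq => (hasDerivAt_iff_tendsto_rat_slope_zero (hcont q.1)).2 hq⟩

section Primitive

variable {E : Type*} [NormedAddCommGroup E] [NormedSpace ℝ E] {f g : ℝ → E}

theorem eq_add_primitive_of_sub_eq_integral (hf : ∀ y, f y - f 0 = ∫ s in (0 : ℝ)..y, g s) :
    f = fun y => (∫ s in (0 : ℝ)..y, g s) + f 0 :=
  funext fun y => sub_eq_iff_eq_add.1 (hf y)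

theorem continuous_of_sub_eq_integral (hg : LocallyIntegrable g)
    (hf : ∀ y, f y - f 0 = ∫ s in (0 : ℝ)..y, g s) : Continuous f := by
  rw [eq_add_primitive_of_sub_eq_integral hf]
  exact (intervalIntegral.continuous_primitive (fun _ _ =>
    (hg.integrableOn_isCompact isCompact_uIcc).intervalIntegrable) 0).add continuous_const

theorem ae_hasDerivAt_of_sub_eq_integral [CompleteSpace E] (hg : LocallyIntegrable g)
    (hf : ∀ y, f y - f 0 = ∫ s in (0 : ℝ)..y, g s) : ∀ᵐ y, HasDerivAt f (g y) y := by
  rw [eq_add_primitive_of_sub_eq_integral hf]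
  exact (LocallyIntegrable.ae_hasDerivAt_integral hg).mono fun y hy => (hy 0).add_const _

end Primitive

/-- Measurability of partial derivatives: if `G : ℝ^n × ℝ → ℝ^m` is absolutely
continuous in `y` for each `x` (with a locally integrable density) and Borel
measurable in `x` for each `y`, then `∂G/∂y` exists at Lebesgue-almost every point
of `ℝ^{n+1}`, and (arbitrarily extended outside its domain of existence) it is a
Lebesgue measurable function of `(x,y)`. -/
theorem measurability_of_partial_derivatives
    (n m : ℕ) (G : (Fin n → ℝ) → ℝ → (Fin m → ℝ))
    (hAC : ∀ x : Fin n → ℝ, ∃ g : ℝ → (Fin m → ℝ),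
      LocallyIntegrable g ∧ ∀ y : ℝ, G x y - G x 0 = ∫ s in (0 : ℝ)..y, g s)
    (hmeas : ∀ y : ℝ, Measurable fun x => G x y) :
    (∀ᵐ q ∂(volume : Measure ((Fin n → ℝ) × ℝ)),
      ∃ d : Fin m → ℝ, HasDerivAt (G q.1) d q.2) ∧
    (∃ h : (Fin n → ℝ) × ℝ → (Fin m → ℝ),
      AEMeasurable h (volume : Measure ((Fin n → ℝ) × ℝ)) ∧
      ∀ᵐ q ∂(volume : Measure ((Fin n → ℝ) × ℝ)),
        HasDerivAt (G q.1) (h q) q.2) := by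
  choose g hg hG using hAC
  obtain ⟨h, hh, hderiv⟩ := exists_measurable_hasDerivAt_ae_prod (μ := volume)
    (fun x => continuous_of_sub_eq_integral (hg x) (hG x)) hmeas
    (fun x => (ae_hasDerivAt_of_sub_eq_integral (hg x) (hG x)).mono fun _ hy => hy.differentiableAt)
  rw [← Measure.volume_eq_prod] at hderiv
  exact ⟨hderiv.mono fun q hq => ⟨h q, hq⟩, h, hh.aemeasurable, hderiv⟩
end
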